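/- For every natural number m and all complex x, y, one has ∑_{k=0}^{m} binom(m,k) · i^{m-k} · H_{m-k}(-i·y) · H_k(x) = (x+y)^m, where H_n denotes the n-th probabilists' Hermite polynomial and i is the imaginary unit. -/
import Mathlib


/-- The probabilists' Hermite polynomials evaluated at a complex argument:
`H_0 = 1`, `H_1 = x`, `H_{n+2} = x·H_{n+1} - (n+1)·H_n`. -/
noncomputable def hermC (x : ℂ) : ℕ → ℂ
  | 0 => 1
  | 1 => x
  | n + 2 => x * hermC x (n + 1) - (n + 1 : ℂ) * hermC x n

lemma conv_aux (x y : ℂ) (a b : ℕ → ℂ) (ha0 : a 0 = 1) (ha1 : a 1 = x)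
    (ha : ∀ n : ℕ, a (n + 2) = x * a (n + 1) - (n + 1 : ℂ) * a n)
    (hb0 : b 0 = 1) (hb1 : b 1 = y)
    (hb : ∀ n : ℕ, b (n + 2) = y * b (n + 1) + (n + 1 : ℂ) * b n) :
    ∀ m : ℕ, ∑ k ∈ Finset.range (m + 1), (m.choose k : ℂ) * b (m - k) * a k = (x + y) ^ m := by
  have ha' : ∀ n : ℕ, a (n + 1) = x * a n - (n : ℂ) * a (n - 1) := by
    rintro (_ | n)
    · simp [ha1, ha0]
    · simpa using ha n
  have hb' : ∀ n : ℕ, b (n + 1) = y * b n + (n : ℂ) * b (n - 1) := by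
    rintro (_ | n)
    · simp [hb1, hb0]
    · simpa using hb n
  intro m
  induction m with
  | zero => simp [ha0, hb0]
  | succ m ih =>
    rw [Finset.sum_range_succ']
    have hsplit : ∀ k ∈ Finset.range (m + 1),
        ((m + 1).choose (k + 1) : ℂ) * b (m + 1 - (k + 1)) * a (k + 1)
          = ((m.choose k : ℂ) * b (m - k) * (x * a k)
              - (m.choose k : ℂ) * (k : ℂ) * b (m - k) * a (k - 1))
            + (m.choose (k + 1) : ℂ) * b (m - k) * a (k + 1) := by
      intro k hk
      rw [Nat.choose_succ_succ, Nat.succ_sub_succ, ha' k]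
      push_cast
      ring
    rw [Finset.sum_congr rfl hsplit, Finset.sum_add_distrib, Finset.sum_sub_distrib]
    have hA : ∑ k ∈ Finset.range (m + 1), (m.choose k : ℂ) * b (m - k) * (x * a k)
        = x * ∑ k ∈ Finset.range (m + 1), (m.choose k : ℂ) * b (m - k) * a k := by
      rw [Finset.mul_sum]
      exact Finset.sum_congr rfl fun k _ => by ring
    have hT : ∑ k ∈ Finset.range (m + 1), (m.choose k : ℂ) * (k : ℂ) * b (m - k) * a (k - 1)
        = ∑ k ∈ Finset.range m,
            (m.choose (k + 1) : ℂ) * ((k : ℂ) + 1) * b (m - (k + 1)) * a k := by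
      rw [Finset.sum_range_succ']
      simp
    have hU : (∑ k ∈ Finset.range (m + 1), (m.choose (k + 1) : ℂ) * b (m - k) * a (k + 1))
          + ((m + 1).choose 0 : ℂ) * b (m + 1 - 0) * a 0
        = ∑ k ∈ Finset.range (m + 2), (m.choose k : ℂ) * b (m + 1 - k) * a k := by
      rw [Finset.sum_range_succ' (fun k => (m.choose k : ℂ) * b (m + 1 - k) * a k) (m + 1)]
      simp [Nat.succ_sub_succ]
    have hUdrop : ∑ k ∈ Finset.range (m + 2), (m.choose k : ℂ) * b (m + 1 - k) * a k
        = ∑ k ∈ Finset.range (m + 1), (m.choose k : ℂ) * b (m + 1 - k) * a k := by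
      rw [Finset.sum_range_succ]
      simp
    have hUsplit : ∑ k ∈ Finset.range (m + 1), (m.choose k : ℂ) * b (m + 1 - k) * a k
        = y * (∑ k ∈ Finset.range (m + 1), (m.choose k : ℂ) * b (m - k) * a k)
          + ∑ k ∈ Finset.range (m + 1),
              (m.choose k : ℂ) * ((m - k : ℕ) : ℂ) * b (m - k - 1) * a k := by
      rw [Finset.mul_sum, ← Finset.sum_add_distrib]
      refine Finset.sum_congr rfl fun k hk => ?_
      have hk' : k ≤ m := Nat.lt_succ_iff.mp (Finset.mem_range.mp hk)
      have hms : m + 1 - k = (m - k) + 1 := by omega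
      rw [hms, hb' (m - k)]
      ring
    have hT' : ∑ k ∈ Finset.range (m + 1),
            (m.choose k : ℂ) * ((m - k : ℕ) : ℂ) * b (m - k - 1) * a k
        = ∑ k ∈ Finset.range m,
            (m.choose (k + 1) : ℂ) * ((k : ℂ) + 1) * b (m - (k + 1)) * a k := by
      rw [Finset.sum_range_succ]
      simp only [Nat.sub_self, Nat.cast_zero, mul_zero, zero_mul, add_zero]
      refine Finset.sum_congr rfl fun k hk => ?_
      have h := Nat.choose_succ_right_eq m k
      have hcast : (m.choose k : ℂ) * ((m - k : ℕ) : ℂ) = (m.choose (k + 1) : ℂ) * ((k : ℂ) + 1) := by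
        have h2 : (m.choose (k + 1) : ℂ) * ((k : ℂ) + 1) = (m.choose k : ℂ) * ((m - k : ℕ) : ℂ) := by
          exact_mod_cast h
        exact h2.symm
      have hsub : m - k - 1 = m - (k + 1) := by omega
      rw [hcast, hsub]
    rw [hA, hT]
    linear_combination hU + hUdrop + hUsplit + hT' + (x + y) * ih

theorem stmt8 (m : ℕ) (x y : ℂ) :
    ∑ k ∈ Finset.range (m + 1),
        (m.choose k : ℂ) * Complex.I ^ (m - k) * hermC (-Complex.I * y) (m - k) * hermC x k
      = (x + y) ^ m := by
  have h := conv_aux x y (hermC x) (fun n => Complex.I ^ n * hermC (-Complex.I * y) n)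
    rfl rfl (fun n => rfl) (by simp [hermC]) (by show Complex.I ^ 1 * hermC (-Complex.I * y) 1 = y; simp [hermC]; rw [← mul_assoc, Complex.I_mul_I]; ring)
    (fun n => by
      show Complex.I ^ (n + 2) * hermC (-Complex.I * y) (n + 2) = _
      simp only [hermC]
      have hI : Complex.I ^ (n + 2) = -Complex.I ^ n := by
        rw [pow_add, Complex.I_sq]; ring
      rw [hI, pow_succ]
      ring) m
  rw [← h]
  exact Finset.sum_congr rfl fun k _ => by ring
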